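/- Let V be a real M×N matrix of full column rank N, G(w) := Vᵀ·diag(w)·V, E(w) := −(1/N)·log(det G(w)) + Σᵢ wᵢ, K := {u ∈ ℝ^M : Vᵀ·diag(u)·V = 0}, and let π_K denote the Euclidean orthogonal projection of ℝ^M onto the linear subspace K. For every η > 0, the regularized energy E_η(w) := E(w) + η·‖π_K w‖² has exactly one minimizer over the nonnegative orthant {w ∈ ℝ^M : wᵢ ≥ 0 for all i}. -/

import Mathlib

/-!
Uniqueness comes from strict convexity of `E_η` on the feasible set. Since `log det` is strictly
concave on positive definite matrices, `E` is strictly convex along every segment on which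
`G(w)` varies; if `G(x) = G(y)`, then `x - y ∈ K`, so `π_K x ≠ π_K y` and the penalty
`η ‖π_K w‖²` is strictly convex along the segment. Existence comes from compactness of
sublevel sets: `log det A ≤ tr A - N` makes `E_η` grow at least like `‖w‖ / 2`, and
`-log det G(w)` blows up near the boundary `det G(w) = 0`.
-/

open Matrix

namespace Matrix

theorem convex_setOf_posDef {n : Type*} : Convex ℝ {A : Matrix n n ℝ | A.PosDef} := by
  intro A hA B hB a b ha hb hab
  rcases ha.eq_or_lt with rfl | ha
  · simpa [show b = 1 by linarith] using hB
  · exact (hA.smul ha).add_posSemidef (hB.posSemidef.smul hb)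

theorem mulVec_injective_of_rank_eq_card {m n : Type*} [Fintype m] [Fintype n]
    {V : Matrix m n ℝ} (hV : V.rank = Fintype.card n) :
    Function.Injective V.mulVec := by
  have h := V.mulVecLin.finrank_range_add_finrank_ker
  rw [Module.finrank_fintype_fun_eq_card] at h
  change V.rank + _ = _ at h
  have hker : LinearMap.ker V.mulVecLin = ⊥ := Submodule.finrank_eq_zero.1 (by omega)
  exact LinearMap.ker_eq_bot.1 hker

variable {n : Type*} [Fintype n] [DecidableEq n]

theorem IsHermitian.det_cfc {T : Matrix n n ℝ} (hT : T.IsHermitian) (f : ℝ → ℝ) :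
    (cfc f T).det = ∏ i, f (hT.eigenvalues i) := by
  simp [hT.cfc_eq, IsHermitian.cfc, -Unitary.conjStarAlgAut_apply]

theorem IsHermitian.smul_one_add_smul_eq_cfc {T : Matrix n n ℝ} (hT : T.IsHermitian) (a b : ℝ) :
    a • (1 : Matrix n n ℝ) + b • T = cfc (fun x => a + b * x) T := by
  rw [cfc_add .., cfc_const_mul .., cfc_const .., cfc_id' ..]
  simp [Algebra.algebraMap_eq_smul_one]

theorem IsHermitian.exists_eigenvalues_ne_one {T : Matrix n n ℝ} (hT : T.IsHermitian)
    (h1 : T ≠ 1) : ∃ i, hT.eigenvalues i ≠ 1 := by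
  by_contra! h
  refine h1 ?_
  rw [← cfc_id' ℝ T, ← cfc_one ℝ T]
  refine cfc_congr fun x hx => ?_
  rw [hT.spectrum_real_eq_range_eigenvalues] at hx
  obtain ⟨i, rfl⟩ := hx
  exact h i

theorem PosDef.mul_log_det_lt_log_det_smul_one_add_smul {T : Matrix n n ℝ} (hT : T.PosDef)
    (h1 : T ≠ 1) {a b : ℝ} (ha : 0 < a) (hb : 0 < b) (hab : a + b = 1) :
    b * Real.log T.det < Real.log (a • (1 : Matrix n n ℝ) + b • T).det := by
  have hpos := hT.eigenvalues_pos
  obtain ⟨i₀, hi₀⟩ := hT.isHermitian.exists_eigenvalues_ne_one h1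
  rw [hT.isHermitian.smul_one_add_smul_eq_cfc, hT.isHermitian.det_cfc,
    hT.isHermitian.det_eq_prod_eigenvalues]
  simp only [RCLike.ofReal_real_eq_id, id_eq]
  rw [Real.log_prod fun i _ => (hpos i).ne',
    Real.log_prod fun i _ => (add_pos ha (mul_pos hb (hpos i))).ne', Finset.mul_sum]
  -- `b log λ = a log 1 + b log λ ≤ log (a + b λ)` by concavity of `log`, strict unless `λ = 1`
  refine Finset.sum_lt_sum (fun i _ => ?_) ⟨i₀, Finset.mem_univ _, ?_⟩
  · simpa using strictConcaveOn_log_Ioi.concaveOn.2 (Set.mem_Ioi.2 one_pos)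
      (Set.mem_Ioi.2 (hpos i)) ha.le hb.le hab
  · simpa using strictConcaveOn_log_Ioi.2 (Set.mem_Ioi.2 one_pos)
      (Set.mem_Ioi.2 (hpos i₀)) (Ne.symm hi₀) ha hb hab

open scoped MatrixOrder in
theorem strictConcaveOn_log_det :
    StrictConcaveOn ℝ {A : Matrix n n ℝ | A.PosDef} (fun A => Real.log A.det) := by
  refine ⟨convex_setOf_posDef, fun A (hA : A.PosDef) B (hB : B.PosDef) hAB a b ha hb hab => ?_⟩
  -- reduce to `A = 1` by the congruence `X ↦ C⁻¹ X C⁻¹` with `C = √A`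
  set C := CFC.sqrt A
  have hC : C.PosDef := (hA.isStrictlyPositive.sqrt).posDef
  have hCC : C * C = A := CFC.sqrt_mul_sqrt_self A
  have hCdet : IsUnit C.det := (isUnit_iff_isUnit_det C).1 hC.isUnit
  set T := C⁻¹ * B * C⁻¹
  have hT : T.PosDef := by
    simpa [T, ← conjTranspose_eq_transpose_of_trivial, hC.isHermitian.inv.eq] using
      hB.conjTranspose_mul_mul_same
        (mulVec_injective_of_isUnit (isUnit_nonsing_inv_iff.2 hC.isUnit))
  have hCTC : C * T * C = B := by
    simp only [T, ← mul_assoc, mul_nonsing_inv _ hCdet, one_mul,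
      nonsing_inv_mul_cancel_right C B hCdet]
  have hdet : ∀ X, (C * X * C).det = A.det * X.det := fun X => by
    rw [← hCC, det_mul, det_mul, det_mul]; ring
  have hcomb : a • A + b • B = C * (a • (1 : Matrix n n ℝ) + b • T) * C := by
    rw [Matrix.mul_add, Matrix.add_mul, Matrix.mul_smul, Matrix.smul_mul, mul_one, hCC,
      Matrix.mul_smul, Matrix.smul_mul, hCTC]
  have hT1 : T ≠ 1 := fun h => hAB (by rw [← hCTC, h, mul_one, hCC])
  have hmid : (a • (1 : Matrix n n ℝ) + b • T).PosDef :=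
    (PosDef.one.smul ha).add (hT.smul hb)
  have key := hT.mul_log_det_lt_log_det_smul_one_add_smul hT1 ha hb hab
  simp only [smul_eq_mul]
  rw [hcomb, hdet, ← hCTC, hdet, Real.log_mul hA.det_pos.ne' hT.det_pos.ne',
    Real.log_mul hA.det_pos.ne' hmid.det_pos.ne']
  linear_combination key + Real.log A.det * hab

theorem PosDef.log_det_le_trace_sub_card {A : Matrix n n ℝ} (hA : A.PosDef) :
    Real.log A.det ≤ A.trace - Fintype.card n := by
  have hpos := hA.eigenvalues_pos
  rw [hA.isHermitian.det_eq_prod_eigenvalues, hA.isHermitian.trace_eq_sum_eigenvalues]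
  simp only [RCLike.ofReal_real_eq_id, id_eq]
  rw [Real.log_prod fun i _ => (hpos i).ne']
  refine (Finset.sum_le_sum fun i _ => Real.log_le_sub_one_of_pos (hpos i)).trans_eq ?_
  simp [Finset.sum_sub_distrib]

end Matrix

theorem norm_smul_add_smul_sq {E : Type*} [NormedAddCommGroup E] [InnerProductSpace ℝ E]
    (x y : E) {a b : ℝ} (hab : a + b = 1) :
    ‖a • x + b • y‖ ^ 2 = a * ‖x‖ ^ 2 + b * ‖y‖ ^ 2 - a * b * ‖x - y‖ ^ 2 := by
  simp only [← real_inner_self_eq_norm_sq, inner_add_add_self, inner_sub_sub_self,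
    real_inner_smul_left, real_inner_smul_right]
  linear_combination (a * inner ℝ x x + b * inner ℝ y y) * hab

theorem EuclideanSpace.norm_le_sum_of_nonneg {m : Type*} [Fintype m] {w : EuclideanSpace ℝ m}
    (hw : ∀ i, 0 ≤ w i) : ‖w‖ ≤ ∑ i, w i := by
  rw [EuclideanSpace.norm_eq, Real.sqrt_le_left (Finset.sum_nonneg fun i _ => hw i)]
  simpa [Real.norm_of_nonneg (hw _)] using Finset.sum_sq_le_sq_sum_of_nonneg fun i _ => hw i

theorem IsCompact.exists_isMinOn_of_sublevel_subset {α β : Type*} [TopologicalSpace α]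
    [LinearOrder β] [TopologicalSpace β] [ClosedIicTopology β] {f : α → β} {S T : Set α}
    (hT : IsCompact T) (hTS : T ⊆ S) (hf : ContinuousOn f T) {x₀ : α} (hx₀ : x₀ ∈ S)
    (hsub : ∀ x ∈ S, f x ≤ f x₀ → x ∈ T) : ∃ z ∈ S, IsMinOn f S z := by
  obtain ⟨z, hzT, hz⟩ := hT.exists_isMinOn ⟨x₀, hsub x₀ hx₀ le_rfl⟩ hf
  refine ⟨z, hTS hzT, fun x hx => ?_⟩
  rcases le_or_gt (f x) (f x₀) with h | h
  · exact hz (hsub x hx h)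
  · exact (hz (hsub x₀ hx₀ le_rfl)).trans h.le

theorem strictConvexOn_neg_log_det_add_sq_norm_starProjection {n E : Type*} [Fintype n]
    [DecidableEq n] [NormedAddCommGroup E] [InnerProductSpace ℝ E]
    (L : E →ₗ[ℝ] Matrix n n ℝ) (K : Submodule ℝ E) [K.HasOrthogonalProjection]
    (hK : LinearMap.ker L ≤ K) {S : Set E} (hS : Convex ℝ S) (hSL : ∀ w ∈ S, (L w).PosDef)
    {c η : ℝ} (hc : 0 < c) (hη : 0 < η) :
    StrictConvexOn ℝ S
      (fun w => -c * Real.log (L w).det + η * ‖K.starProjection w‖ ^ 2) := by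
  refine ⟨hS, fun x hx y hy hxy a b ha hb hab => ?_⟩
  set P := K.starProjection
  have hlog : a * Real.log (L x).det + b * Real.log (L y).det ≤
      Real.log (L (a • x + b • y)).det := by
    simpa using Matrix.strictConcaveOn_log_det.concaveOn.2 (hSL x hx) (hSL y hy) ha.le hb.le hab
  have hnorm := norm_smul_add_smul_sq (P x) (P y) hab
  rw [← map_smul, ← map_smul, ← map_add] at hnorm
  -- one of the two terms is strictly convex along `[x, y]`: since `ker L ≤ K`, `L x = L y`
  -- forces `P (x - y) = x - y ≠ 0`
  have hdiff : L x ≠ L y ∨ P x ≠ P y := by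
    by_contra! h
    have hxyK : x - y ∈ K := hK (by rw [LinearMap.mem_ker, map_sub, h.1, sub_self])
    have hPxy := K.starProjection_eq_self_iff.2 hxyK
    rw [map_sub, h.2, sub_self] at hPxy
    exact hxy (sub_eq_zero.1 hPxy.symm)
  simp only [smul_eq_mul]
  rw [hnorm]
  rcases hdiff with hL | hP
  · have hlt : a * Real.log (L x).det + b * Real.log (L y).det <
        Real.log (L (a • x + b • y)).det := by
      simpa using Matrix.strictConcaveOn_log_det.2 (hSL x hx) (hSL y hy) hL ha hb hab
    linarith [mul_lt_mul_of_pos_left hlt hc,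
      mul_nonneg (mul_nonneg hη.le (mul_pos ha hb).le) (sq_nonneg ‖P x - P y‖)]
  · have hPxy : 0 < ‖P x - P y‖ := norm_pos_iff.2 (sub_ne_zero.2 hP)
    linarith [mul_le_mul_of_nonneg_left hlog hc.le,
      mul_pos (mul_pos hη (mul_pos ha hb)) (pow_pos hPxy 2)]

section DesignEnergy

variable {m n : Type*} [Fintype m] [DecidableEq m]

def weightedGram (V : Matrix m n ℝ) : EuclideanSpace ℝ m →ₗ[ℝ] Matrix n n ℝ where
  toFun w := Vᵀ * diagonal (fun i => w i) * V
  map_add' x y := by simp [← diagonal_add, Matrix.mul_add, Matrix.add_mul]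
  map_smul' r x := by
    rw [show (fun i => (r • x) i) = r • fun i => x i from rfl, diagonal_smul, Matrix.mul_smul,
      Matrix.smul_mul]
    rfl

variable (V : Matrix m n ℝ)

@[simp]
theorem weightedGram_apply (w : EuclideanSpace ℝ m) :
    weightedGram V w = Vᵀ * diagonal (fun i => w i) * V :=
  rfl

variable [Fintype n]

theorem posSemidef_weightedGram {w : EuclideanSpace ℝ m} (hw : ∀ i, 0 ≤ w i) :
    (weightedGram V w).PosSemidef := by
  simpa using (PosSemidef.diagonal fun i => hw i).conjTranspose_mul_mul_same V

theorem trace_weightedGram (w : EuclideanSpace ℝ m) :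
    (weightedGram V w).trace = ∑ i, w i * ∑ j, V i j ^ 2 := by
  rw [weightedGram_apply, trace_mul_cycle, trace_mul_comm (V * Vᵀ)]
  simp only [trace, diag_apply, diagonal_mul]
  simp only [mul_apply, transpose_apply, sq]

variable [DecidableEq n]

def feasibleWeights : Set (EuclideanSpace ℝ m) :=
  {w | (∀ i, 0 ≤ w i) ∧ 0 < (weightedGram V w).det}

variable {V} in
theorem posDef_weightedGram_of_mem_feasibleWeights {w : EuclideanSpace ℝ m}
    (hw : w ∈ feasibleWeights V) : (weightedGram V w).PosDef :=
  (posSemidef_weightedGram V hw.1).posDef_iff_det_ne_zero.2 hw.2.ne'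

theorem convex_feasibleWeights : Convex ℝ (feasibleWeights V) := by
  intro x hx y hy a b ha hb hab
  refine ⟨fun i => ?_, ?_⟩
  · simpa using add_nonneg (mul_nonneg ha (hx.1 i)) (mul_nonneg hb (hy.1 i))
  · have := convex_setOf_posDef (posDef_weightedGram_of_mem_feasibleWeights hx)
      (posDef_weightedGram_of_mem_feasibleWeights hy) ha hb hab
    rw [Set.mem_ofPred_eq, ← map_smul, ← map_smul, ← map_add] at this
    exact this.det_pos

theorem toLp_one_mem_feasibleWeights (hV : V.rank = Fintype.card n) :
    WithLp.toLp 2 1 ∈ feasibleWeights V := by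
  refine ⟨fun _ => zero_le_one, ?_⟩
  simpa using (PosDef.conjTranspose_mul_self V (mulVec_injective_of_rank_eq_card hV)).det_pos

theorem continuous_det_weightedGram : Continuous fun w => (weightedGram V w).det :=
  (weightedGram V).continuous_of_finiteDimensional.matrix_det

noncomputable def designEnergy (K : Submodule ℝ (EuclideanSpace ℝ m)) (c η : ℝ)
    (w : EuclideanSpace ℝ m) : ℝ :=
  -c * Real.log (weightedGram V w).det + ∑ i, w i + η * ‖K.starProjection w‖ ^ 2

variable {V} (K : Submodule ℝ (EuclideanSpace ℝ m)) {c η : ℝ}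

theorem strictConvexOn_designEnergy (hK : LinearMap.ker (weightedGram V) ≤ K) (hc : 0 < c)
    (hη : 0 < η) : StrictConvexOn ℝ (feasibleWeights V) (designEnergy V K c η) := by
  have hsum : ConvexOn ℝ (feasibleWeights V) fun w : EuclideanSpace ℝ m => ∑ i, w i :=
    ⟨convex_feasibleWeights V, fun x _ y _ a b _ _ _ => by
      simp [Finset.sum_add_distrib, Finset.mul_sum]⟩
  refine ((strictConvexOn_neg_log_det_add_sq_norm_starProjection (weightedGram V) K hK
    (convex_feasibleWeights V) (fun w hw => posDef_weightedGram_of_mem_feasibleWeights hw)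
    hc hη).add_convexOn hsum).congr fun w _ => ?_
  simp only [designEnergy, Pi.add_apply]
  ring

theorem designEnergy_coercive (hc : 0 < c) (hη : 0 ≤ η) :
    ∃ C, ∀ w ∈ feasibleWeights V, (∑ i, w i) / 2 - C ≤ designEnergy V K c η w := by
  set β := 1 + ∑ i, ∑ j, V i j ^ 2
  have hβ : 0 < β := by positivity
  set t := 1 / (2 * c * β)
  have ht : 0 < t := by positivity
  refine ⟨-c * Fintype.card n * (1 + Real.log t), fun w hw => ?_⟩
  set A := weightedGram V w
  have hA : A.PosDef := posDef_weightedGram_of_mem_feasibleWeights hw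
  -- `log det ≤ tr - card n`, applied to `t • A` with `t` so small that `c t tr A ≤ (∑ w) / 2`
  have hlog := (hA.smul ht).log_det_le_trace_sub_card
  rw [det_smul, Real.log_mul (by positivity) hA.det_pos.ne', Real.log_pow, trace_smul,
    smul_eq_mul] at hlog
  have htr : A.trace ≤ β * ∑ i, w i := by
    rw [trace_weightedGram, Finset.mul_sum]
    refine Finset.sum_le_sum fun i _ => ?_
    rw [mul_comm β]
    refine mul_le_mul_of_nonneg_left ?_ (hw.1 i)
    have := Finset.single_le_sum (f := fun i => ∑ j, V i j ^ 2) (fun i _ => by positivity)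
      (Finset.mem_univ i)
    linarith
  have hcA : c * (t * A.trace) ≤ (∑ i, w i) / 2 := calc
    c * (t * A.trace) ≤ c * (t * (β * ∑ i, w i)) := by gcongr
    _ = (∑ i, w i) / 2 := by simp only [t]; field_simp
  have hproj : 0 ≤ η * ‖K.starProjection w‖ ^ 2 := by positivity
  unfold designEnergy
  linarith [mul_le_mul_of_nonneg_left hlog hc.le]

theorem exp_le_det_of_designEnergy_le (hc : 0 < c) (hη : 0 ≤ η) {w : EuclideanSpace ℝ m}
    (hw : w ∈ feasibleWeights V) {r : ℝ} (hr : designEnergy V K c η w ≤ r) :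
    Real.exp (-r / c) ≤ (weightedGram V w).det := by
  have hsum : 0 ≤ ∑ i, w i := Finset.sum_nonneg fun i _ => hw.1 i
  have hproj : 0 ≤ η * ‖K.starProjection w‖ ^ 2 := by positivity
  have hlog : -r / c ≤ Real.log (weightedGram V w).det := by
    rw [div_le_iff₀ hc]
    unfold designEnergy at hr
    linarith
  exact (Real.exp_le_exp.2 hlog).trans_eq (Real.exp_log hw.2)

theorem continuousOn_designEnergy :
    ContinuousOn (designEnergy V K c η) {w | (weightedGram V w).det ≠ 0} :=
  ((continuousOn_const.mul ((continuous_det_weightedGram V).continuousOn.log fun _ hw => hw)).add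
    (by fun_prop)).add (by fun_prop)

theorem exists_isMinOn_designEnergy (hV : V.rank = Fintype.card n) (hc : 0 < c) (hη : 0 ≤ η) :
    ∃ z ∈ feasibleWeights V, IsMinOn (designEnergy V K c η) (feasibleWeights V) z := by
  have hw₁ := toLp_one_mem_feasibleWeights V hV
  set r := designEnergy V K c η (WithLp.toLp 2 1)
  obtain ⟨C, hC⟩ := designEnergy_coercive (V := V) K hc hη
  set T := {w : EuclideanSpace ℝ m | (∀ i, 0 ≤ w i) ∧
    Real.exp (-r / c) ≤ (weightedGram V w).det} ∩ Metric.closedBall 0 (2 * (r + C))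
  have hTS : T ⊆ feasibleWeights V := fun w hw => ⟨hw.1.1, (Real.exp_pos _).trans_le hw.1.2⟩
  have hT : IsCompact T := by
    refine (isCompact_closedBall 0 _).inter_left ?_
    rw [Set.ofPred_and, Set.ofPred_forall]
    exact (isClosed_iInter fun i => isClosed_le continuous_const (by fun_prop)).inter
      (isClosed_le continuous_const (continuous_det_weightedGram V))
  refine hT.exists_isMinOn_of_sublevel_subset hTS
    ((continuousOn_designEnergy K).mono fun w hw => (hTS hw).2.ne') hw₁ fun w hw hr =>
      ⟨⟨hw.1, exp_le_det_of_designEnergy_le K hc hη hw hr⟩, ?_⟩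
  rw [mem_closedBall_zero_iff]
  linarith [hC w hw, EuclideanSpace.norm_le_sum_of_nonneg hw.1]

end DesignEnergy

theorem stmt_10_general (M N : ℕ) (hN : 0 < N)
    (V : Matrix (Fin M) (Fin N) ℝ) (hV : V.rank = N)
    (G : (Fin M → ℝ) → Matrix (Fin N) (Fin N) ℝ)
    (hG : ∀ w, G w = Vᵀ * diagonal w * V)
    (E : EuclideanSpace ℝ (Fin M) → ℝ)
    (hE : ∀ w, E w = -(1 / (N : ℝ)) * Real.log (G (fun i => w i)).det + ∑ i, w i)
    (K : Submodule ℝ (EuclideanSpace ℝ (Fin M)))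
    (hK : ∀ u : EuclideanSpace ℝ (Fin M), u ∈ K ↔ Vᵀ * diagonal (fun i => u i) * V = 0)
    (η : ℝ) (hη : 0 < η)
    (Eη : EuclideanSpace ℝ (Fin M) → ℝ)
    (hEη : ∀ w, Eη w = E w + η * ‖(K.orthogonalProjectionOnto w : EuclideanSpace ℝ (Fin M))‖ ^ 2) :
    ∃! w : EuclideanSpace ℝ (Fin M),
      w ∈ {w : EuclideanSpace ℝ (Fin M) | (∀ i, 0 ≤ w i) ∧ 0 < (G (fun i => w i)).det} ∧
      IsMinOn Eη {w : EuclideanSpace ℝ (Fin M) | (∀ i, 0 ≤ w i) ∧ 0 < (G (fun i => w i)).det} w := by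
  obtain rfl : G = fun w => Vᵀ * diagonal w * V := funext hG
  obtain rfl : Eη = designEnergy V K (1 / N) η := funext fun w => by rw [hEη, hE]; rfl
  have hker : LinearMap.ker (weightedGram V) ≤ K := fun u hu => (hK u).2 hu
  have hc : (0 : ℝ) < 1 / N := by positivity
  obtain ⟨z, hz, hmin⟩ := exists_isMinOn_designEnergy K (by rwa [Fintype.card_fin]) hc hη.le
  exact ⟨z, ⟨hz, hmin⟩, fun y hy =>
    (strictConvexOn_designEnergy K hker hc hη).eq_of_isMinOn hy.2 hmin hy.1 hz⟩

theorem stmt_10 (M N : ℕ) (hN : 0 < N) (hMN : N ≤ M)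
    (V : Matrix (Fin M) (Fin N) ℝ) (hV : V.rank = N)
    (G : (Fin M → ℝ) → Matrix (Fin N) (Fin N) ℝ)
    (hG : ∀ w, G w = Vᵀ * diagonal w * V)
    (E : EuclideanSpace ℝ (Fin M) → ℝ)
    (hE : ∀ w, E w = -(1 / (N : ℝ)) * Real.log (G (fun i => w i)).det + ∑ i, w i)
    (K : Submodule ℝ (EuclideanSpace ℝ (Fin M)))
    (hK : ∀ u : EuclideanSpace ℝ (Fin M), u ∈ K ↔ Vᵀ * diagonal (fun i => u i) * V = 0)
    (η : ℝ) (hη : 0 < η)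
    (Eη : EuclideanSpace ℝ (Fin M) → ℝ)
    (hEη : ∀ w, Eη w = E w + η * ‖(K.orthogonalProjectionOnto w : EuclideanSpace ℝ (Fin M))‖ ^ 2) :
    ∃! w : EuclideanSpace ℝ (Fin M),
      w ∈ {w : EuclideanSpace ℝ (Fin M) | (∀ i, 0 ≤ w i) ∧ 0 < (G (fun i => w i)).det} ∧
      IsMinOn Eη {w : EuclideanSpace ℝ (Fin M) | (∀ i, 0 ≤ w i) ∧ 0 < (G (fun i => w i)).det} w :=
  stmt_10_general M N hN V hV G hG E hE K hK η hη Eη hEη
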